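/- For n ≥ 1 and ρ ∈ ℕ, let P(n,ρ) be the probability that a plane binary tree with n leaves chosen uniformly at random satisfies c(t) = ρ, i.e., P(n,ρ) = (number of plane binary trees with n leaves and c(t) = ρ)/C_{n−1}. Then P(1,0) = 1, P(1,ρ) = 0 for ρ ≥ 1, and for all n ≥ 2 and ρ ≥ 1, P(n,ρ) = Σ_{d ∈ Div(ρ)} Σ_{j=1}^{n−1} (C_{j−1}·C_{n−j−1}/C_{n−1}) · P(j, d−1) · P(n−j, ρ/d − 1), where Div(ρ) is the set of positive divisors of ρ. -/

import Mathlib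

/-
A tree with n ≥ 2 leaves is node(l, r) with l having j ∈ [1, n-1] leaves, and c = ρ exactly
when c(l) + 1 = d is a divisor of ρ and c(r) + 1 = ρ / d. Sorting the trees by (d, j) splits the
count into products of counts, and each count with m leaves is C_{m-1} times the corresponding P.
-/

/-- Plane binary trees: a leaf, or an ordered pair of plane binary trees. -/
inductive PTree : Type where
  | leaf : PTree
  | node : PTree → PTree → PTree
deriving DecidableEq

namespace PTree

/-- Number of leaves of a plane binary tree. -/
def leaves : PTree → ℕ
  | leaf => 1
  | node l r => leaves l + leaves r

/-- Number of root ancestral configurations: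
`c(leaf) = 0`, `c(node l r) = (c l + 1) * (c r + 1)`. -/
def c : PTree → ℕ
  | leaf => 0
  | node l r => (c l + 1) * (c r + 1)

/-- The finite set of plane binary trees with `n` leaves. -/
def trees : ℕ → Finset PTree
  | 0 => ∅
  | 1 => {leaf}
  | (n+2) =>
      (Finset.Icc 1 (n+1)).attach.biUnion fun j =>
        ((trees j.1) ×ˢ (trees (n+2-j.1))).image fun p => node p.1 p.2
decreasing_by
  · have h := Finset.mem_Icc.mp j.2; omega
  · have h := Finset.mem_Icc.mp j.2; omega

end PTree

/-- `P n ρ`: the probability that a plane binary tree with `n` leaves chosen uniformly at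
random has exactly `ρ` root configurations. -/
def P (n ρ : ℕ) : ℚ :=
  (((PTree.trees n).filter (fun t => PTree.c t = ρ)).card : ℚ) / (catalan (n - 1) : ℚ)

open Finset

theorem catalan_pos (n : ℕ) : 0 < catalan n :=
  Nat.pos_of_mul_pos_left ((succ_mul_catalan_eq_centralBinom n).symm ▸ n.centralBinom_pos)

theorem Nat.succ_mul_succ_eq_and_succ_eq_iff {a b d ρ : ℕ} (hd : d ∈ ρ.divisors) :
    (a + 1) * (b + 1) = ρ ∧ a + 1 = d ↔ a = d - 1 ∧ b = ρ / d - 1 := by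
  obtain ⟨hdρ, hρ⟩ := Nat.mem_divisors.mp hd
  have hd_pos : 0 < d := Nat.pos_of_mem_divisors hd
  have hquot : 0 < ρ / d := Nat.div_pos (Nat.le_of_dvd (Nat.pos_of_ne_zero hρ) hdρ) hd_pos
  constructor
  · rintro ⟨rfl, rfl⟩
    rw [Nat.mul_div_cancel_left _ hd_pos]
    omega
  · rintro ⟨ha, hb⟩
    refine ⟨?_, by omega⟩
    rw [show a + 1 = d by omega, show b + 1 = ρ / d by omega, Nat.mul_div_cancel' hdρ]

namespace PTree

theorem one_le_leaves (t : PTree) : 1 ≤ t.leaves := by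
  induction t with
  | leaf => rfl
  | node l r ihl _ => exact ihl.trans (Nat.le_add_right _ _)

theorem mem_trees {n : ℕ} {t : PTree} : t ∈ trees n ↔ t.leaves = n := by
  induction t generalizing n with
  | leaf => match n with
    | 0 | 1 | n + 2 => simp [trees, leaves]
  | node l r ihl ihr =>
    have := one_le_leaves l
    have := one_le_leaves r
    match n with
    | 0 | 1 => simp [trees, leaves]; omega
    | n + 2 =>
      simp only [trees, mem_biUnion, mem_attach, true_and, mem_image, mem_product, node.injEq,
        Prod.exists, Subtype.exists, mem_Icc, leaves]
      constructor
      · rintro ⟨j, _, l, r, ⟨hl, hr⟩, rfl, rfl⟩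
        rw [ihl] at hl
        rw [ihr] at hr
        omega
      · intro h
        exact ⟨l.leaves, by omega, l, r, ⟨ihl.mpr rfl, ihr.mpr (by omega)⟩, rfl, rfl⟩

theorem node_injective : Function.Injective fun p : PTree × PTree => node p.1 p.2 := by
  rintro ⟨l, r⟩ ⟨l', r'⟩ h
  simp_all

def subtreePairs (n : ℕ) : Finset (PTree × PTree) :=
  (Icc 1 (n - 1)).biUnion fun j => trees j ×ˢ trees (n - j)

theorem mem_subtreePairs {n : ℕ} {p : PTree × PTree} :
    p ∈ subtreePairs n ↔ p.1.leaves + p.2.leaves = n := by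
  have := one_le_leaves p.1
  have := one_le_leaves p.2
  simp only [subtreePairs, mem_biUnion, mem_product, mem_trees, mem_Icc]
  constructor
  · rintro ⟨j, _, h₁, h₂⟩
    omega
  · intro h
    exact ⟨p.1.leaves, by omega, rfl, by omega⟩

theorem trees_eq_image_subtreePairs {n : ℕ} (hn : 2 ≤ n) :
    trees n = (subtreePairs n).image fun p => node p.1 p.2 := by
  ext t
  cases t with
  | leaf => simp [mem_trees, leaves]; omega
  | node l r => simp [mem_trees, mem_subtreePairs, leaves]

def treesWith (n ρ : ℕ) : Finset PTree :=
  (trees n).filter (c · = ρ)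

theorem card_treesWith {n ρ : ℕ} (hn : 2 ≤ n) :
    #(treesWith n ρ) = ∑ d ∈ ρ.divisors, ∑ j ∈ Icc 1 (n - 1),
      #(treesWith j (d - 1)) * #(treesWith (n - j) (ρ / d - 1)) := by
  set pairs := (subtreePairs n).filter fun p => (c p.1 + 1) * (c p.2 + 1) = ρ
  have h_image : treesWith n ρ = pairs.image fun p => node p.1 p.2 := by
    rw [treesWith, trees_eq_image_subtreePairs hn, filter_image]
    rfl
  have h_maps : (pairs : Set (PTree × PTree)).MapsTo (fun p => (c p.1 + 1, p.1.leaves))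
      (ρ.divisors ×ˢ Icc 1 (n - 1) : Finset (ℕ × ℕ)) := by
    intro p hp
    simp only [pairs, coe_filter, Set.mem_ofPred_eq, mem_subtreePairs] at hp
    have := one_le_leaves p.2
    simp only [coe_product, Set.mem_prod, mem_coe, Nat.mem_divisors, mem_Icc]
    refine ⟨⟨Dvd.intro _ hp.2, by rw [← hp.2]; positivity⟩, one_le_leaves p.1, by omega⟩
  rw [h_image, card_image_of_injective _ node_injective, card_eq_sum_card_fiberwise h_maps,
    sum_product]
  refine sum_congr rfl fun d hd => sum_congr rfl fun j _ => ?_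
  rw [← card_product]
  congr 1
  ext ⟨l, r⟩
  simp only [pairs, treesWith, mem_filter, mem_product, mem_subtreePairs, mem_trees, Prod.mk.injEq]
  have h_conf := Nat.succ_mul_succ_eq_and_succ_eq_iff (a := l.c) (b := r.c) hd
  have h_leaves : l.leaves + r.leaves = n ∧ l.leaves = j ↔ l.leaves = j ∧ r.leaves = n - j := by
    have := one_le_leaves r
    omega
  tauto

end PTree

theorem P_one (ρ : ℕ) : P 1 ρ = if ρ = 0 then 1 else 0 := by
  by_cases hρ : ρ = 0 <;> simp [P, PTree.trees, filter_singleton, PTree.c, hρ, eq_comm]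

theorem card_treesWith_eq_catalan_mul_P (n ρ : ℕ) :
    (#(PTree.treesWith n ρ) : ℚ) = catalan (n - 1) * P n ρ := by
  have := catalan_pos (n - 1)
  rw [P, mul_div_cancel₀ _ (by positivity)]
  rfl

/-- `P 1 0 = 1`, `P 1 ρ = 0` for `ρ ≥ 1`, and for `n ≥ 2`, `ρ ≥ 1`,
`P n ρ = Σ_{d ∣ ρ} Σ_{j=1}^{n−1} (C_{j−1}·C_{n−j−1}/C_{n−1}) · P j (d−1) · P (n−j) (ρ/d − 1)`. -/
theorem P_recurrence :
    P 1 0 = 1 ∧ (∀ ρ : ℕ, 1 ≤ ρ → P 1 ρ = 0) ∧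
    ∀ n : ℕ, 2 ≤ n → ∀ ρ : ℕ, 1 ≤ ρ →
      P n ρ =
        ∑ d ∈ ρ.divisors, ∑ j ∈ Finset.Icc 1 (n - 1),
          ((catalan (j - 1) : ℚ) * (catalan (n - j - 1) : ℚ) / (catalan (n - 1) : ℚ)) *
            P j (d - 1) * P (n - j) (ρ / d - 1) := by
  refine ⟨by simp [P_one], fun ρ hρ => by simp [P_one]; omega, fun n hn ρ _ => ?_⟩
  have := catalan_pos (n - 1)
  rw [P, ← PTree.treesWith, PTree.card_treesWith hn]
  push_cast
  simp only [sum_div]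
  refine sum_congr rfl fun d _ => sum_congr rfl fun j _ => ?_
  rw [card_treesWith_eq_catalan_mul_P, card_treesWith_eq_catalan_mul_P]
  field_simp
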